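/- arXiv:quant-ph/0211104 — 5 statements merged into one kernel-verified Lean document; each statement's English description precedes it below -/
import Mathlib

section
/- Let S = {s₁,…,sₙ} be a finite set of states, C a set of consequences with addition, and A the set of functions P : S → C with pointwise addition. Suppose the preference order ≻ on A is represented by an additive real value function V (i.e., V(P₁+P₂) = V(P₁)+V(P₂) and V(P₁) > V(P₂) iff P₁ ≻ P₂), and Dominance holds: if V(P(sᵢ)) ≥ V(P'(sᵢ)) for all i then V(P) ≥ V(P'). Then there exist nonnegative reals p₁,…,pₙ with Σᵢ pᵢ = 1 such that for every act P, V(P) = Σᵢ pᵢ·V(P(sᵢ)). -/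
/-!
Additivity writes `V P` as `∑ i, wᵢ (P i)`, where `wᵢ x` is the value of the act paying `x` in
state `sᵢ` and `0` elsewhere. Dominance applied to such one-state acts says that `wᵢ` is monotone
with respect to `u x = V (fun _ => x)`. Two additive real functions, one monotone with respect to the
other, are proportional: comparing the integer combinations `m • x` and `k • x₀` pins
`m * wᵢ x` down to within a bounded error of `m * u x * wᵢ x₀ / u x₀`, for every `m`. Hence
`wᵢ = pᵢ u` with `pᵢ = wᵢ x₀ / u x₀ ≥ 0`, and `∑ wᵢ = u` forces `∑ pᵢ = 1`.
-/

section MonotoneWithRespectTo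

variable {M : Type*} [AddCommMonoid M] {f g : M →+ ℝ}

theorem nonneg_of_le_imp_le (hfg : ∀ a b, f a ≤ f b → g a ≤ g b) {x : M} (hx : 0 ≤ f x) :
    0 ≤ g x := by
  simpa using hfg 0 x (by simpa using hx)

theorem int_comb_nonpos_of_le_imp_le (hfg : ∀ a b, f a ≤ f b → g a ≤ g b) (x y : M) (a b : ℤ)
    (h : a * f x + b * f y ≤ 0) : a * g x + b * g y ≤ 0 := by
  have ha : ((a.toNat : ℤ) : ℝ) - ((-a).toNat : ℤ) = a := by
    exact_mod_cast Int.toNat_sub_toNat_neg a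
  have hb : ((b.toNat : ℤ) : ℝ) - ((-b).toNat : ℤ) = b := by
    exact_mod_cast Int.toNat_sub_toNat_neg b
  push_cast at ha hb
  have key := hfg (a.toNat • x + b.toNat • y) ((-a).toNat • x + (-b).toNat • y)
  simp only [map_add, map_nsmul, nsmul_eq_mul] at key
  rw [← ha, ← hb] at h ⊢
  linarith [key (by linarith)]

theorem mul_apply_eq_of_le_imp_le (hfg : ∀ a b, f a ≤ f b → g a ≤ g b) {x₀ : M}
    (hx₀ : 0 < f x₀) (x : M) : f x₀ * g x = f x * g x₀ := by
  have hq : 0 ≤ g x₀ := nonneg_of_le_imp_le hfg hx₀.le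
  have hbound : ∀ m : ℕ, |m * (f x₀ * g x - f x * g x₀)| ≤ f x₀ * g x₀ := by
    intro m
    set k := ⌊m * f x / f x₀⌋
    have hk : k * f x₀ ≤ m * f x := (le_div_iff₀ hx₀).1 (Int.floor_le _)
    have hk' : m * f x < (k + 1) * f x₀ := (div_lt_iff₀ hx₀).1 (Int.lt_floor_add_one _)
    have hlow := int_comb_nonpos_of_le_imp_le hfg x x₀ (-m) k (by push_cast; linarith)
    have hupp := int_comb_nonpos_of_le_imp_le hfg x x₀ m (-(k + 1)) (by push_cast; linarith)
    push_cast at hlow hupp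
    rw [abs_le]
    constructor
    · nlinarith [mul_le_mul_of_nonneg_left hlow hx₀.le, mul_le_mul_of_nonneg_right hk'.le hq]
    · nlinarith [mul_le_mul_of_nonneg_left hupp hx₀.le, mul_le_mul_of_nonneg_right hk hq]
  by_contra hne
  have hd : 0 < |f x₀ * g x - f x * g x₀| := abs_pos.2 (sub_ne_zero.2 hne)
  obtain ⟨m, hm⟩ := exists_nat_gt (f x₀ * g x₀ / |f x₀ * g x - f x * g x₀|)
  have hm' := hbound m
  rw [abs_mul, Nat.abs_cast] at hm'
  linarith [(div_lt_iff₀ hd).1 hm]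

end MonotoneWithRespectTo

section Acts

variable {ι C : Type*} [AddCommMonoid C]

def constValue (V : (ι → C) →+ ℝ) : C →+ ℝ :=
  V.comp (Pi.constAddMonoidHom ι C)

theorem constValue_apply (V : (ι → C) →+ ℝ) (x : C) : constValue V x = V (fun _ => x) := rfl

variable [DecidableEq ι]

def singleValue (V : (ι → C) →+ ℝ) (i : ι) : C →+ ℝ :=
  V.comp (AddMonoidHom.single (fun _ => C) i)

theorem singleValue_apply (V : (ι → C) →+ ℝ) (i : ι) (x : C) :
    singleValue V i x = V (Pi.single i x) := rfl

theorem singleValue_le_of_constValue_le {V : (ι → C) →+ ℝ}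
    (hdom : ∀ P P' : ι → C, (∀ i, V (fun _ => P i) ≥ V (fun _ => P' i)) → V P ≥ V P')
    (i : ι) (a b : C) (h : constValue V a ≤ constValue V b) :
    singleValue V i a ≤ singleValue V i b := by
  refine hdom (Pi.single i b) (Pi.single i a) fun j => ?_
  rcases eq_or_ne j i with rfl | hji
  · simpa [constValue_apply] using h
  · simp [hji]

variable [Fintype ι]

theorem sum_singleValue (V : (ι → C) →+ ℝ) (P : ι → C) : ∑ i, singleValue V i (P i) = V P := by
  simp only [singleValue_apply, ← map_sum, Finset.univ_sum_single]

theorem exists_weights_of_dominance {V : (ι → C) →+ ℝ}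
    (hdom : ∀ P P' : ι → C, (∀ i, V (fun _ => P i) ≥ V (fun _ => P' i)) → V P ≥ V P')
    {x₀ : C} (hx₀ : 0 < V (fun _ => x₀)) :
    ∃ p : ι → ℝ, (∀ i, 0 ≤ p i) ∧ ∑ i, p i = 1 ∧ ∀ P, V P = ∑ i, p i * V (fun _ => P i) := by
  have hmono := singleValue_le_of_constValue_le hdom
  refine ⟨fun i => singleValue V i x₀ / V (fun _ => x₀),
    fun i => div_nonneg (nonneg_of_le_imp_le (hmono i) hx₀.le) hx₀.le, ?_, fun P => ?_⟩
  · rw [← Finset.sum_div, sum_singleValue V (fun _ => x₀), div_self hx₀.ne']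
  · rw [← sum_singleValue V P]
    refine Finset.sum_congr rfl fun i _ => ?_
    have h := mul_apply_eq_of_le_imp_le (hmono i) hx₀ (P i)
    simp only [constValue_apply] at h
    field_simp
    linarith

end Acts

theorem stmt_5_general {n : ℕ} {C : Type*} [AddCommMonoid C]
    (V : (Fin n → C) → ℝ)
    (hadd : ∀ P Q : Fin n → C, V (P + Q) = V P + V Q)
    (hdom : ∀ P P' : Fin n → C,
      (∀ i, V (fun _ => P i) ≥ V (fun _ => P' i)) → V P ≥ V P')
    (hx : ∃ x : C, V (fun _ => x) > 0) :
    ∃ p : Fin n → ℝ, (∀ i, 0 ≤ p i) ∧ (∑ i, p i) = 1 ∧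
      ∀ P : Fin n → C, V P = ∑ i, p i * V (fun _ => P i) := by
  obtain ⟨x₀, hx₀⟩ := hx
  exact exists_weights_of_dominance (V := AddMonoidHom.mk' V hadd) hdom hx₀

theorem stmt_5 {n : ℕ} (hn : 0 < n) {C : Type*} [AddCommMonoid C]
    (V : (Fin n → C) → ℝ)
    (succ : (Fin n → C) → (Fin n → C) → Prop)
    (hrep : ∀ P Q : Fin n → C, V P > V Q ↔ succ P Q)
    (hadd : ∀ P Q : Fin n → C, V (P + Q) = V P + V Q)
    (hdom : ∀ P P' : Fin n → C,
      (∀ i, V (fun _ => P i) ≥ V (fun _ => P' i)) → V P ≥ V P')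
    (hx : ∃ x : C, V (fun _ => x) > 0) :
    ∃ p : Fin n → ℝ, (∀ i, 0 ≤ p i) ∧ (∑ i, p i) = 1 ∧
      ∀ P : Fin n → C, V P = ∑ i, p i * V (fun _ => P i) :=
  stmt_5_general V hadd hdom hx
end

section
/- With the setup of the expected-utility theorem for additive acts and x, y consequences with V(y) > V(x) > 0: the weights pᵢ(x) = V(P_{x,i})/V(x) and pᵢ(y) = V(P_{y,i})/V(y) are equal, i.e., pᵢ(y) = pᵢ(x) for all i. -/
theorem stmt_7 {n : ℕ} {C : Type*} [AddCommMonoid C]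
    (V : (Fin n → C) → ℝ)
    (hadd : ∀ P Q : Fin n → C, V (P + Q) = V P + V Q)
    (hdom : ∀ P P' : Fin n → C,
      (∀ i, V (fun _ => P i) ≥ V (fun _ => P' i)) → V P ≥ V P')
    (x y : C) (hx : V (fun _ => x) > 0)
    (hxy : V (fun _ => y) > V (fun _ => x)) :
    ∀ i : Fin n,
      V (fun j => if j = i then y else 0) / V (fun _ => y) =
      V (fun j => if j = i then x else 0) / V (fun _ => x) := by
  intro i
  set Vx := V (fun _ => x) with hVxdef
  set Vy := V (fun _ => y) with hVydef
  have hy : Vy > 0 := lt_trans hx hxy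
  set Pxi : Fin n → C := fun j => if j = i then x else 0 with hPxi
  set Pyi : Fin n → C := fun j => if j = i then y else 0 with hPyi
  have hV0 : V (0 : Fin n → C) = 0 := by
    have h := hadd 0 0
    rw [add_zero] at h
    linarith
  have hsmul : ∀ (m : ℕ) (P : Fin n → C), V (m • P) = m * V P := by
    intro m P
    induction m with
    | zero => simpa using hV0
    | succ k ih =>
      rw [succ_nsmul, hadd, ih]
      push_cast; ring
  have hconst : ∀ (m : ℕ) (c : C), V (fun _ => (m • c : C)) = m * V (fun _ => c) := by
    intro m c
    have : (fun _ : Fin n => (m • c : C)) = m • (fun _ : Fin n => c) := rfl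
    rw [this, hsmul]
  have hVc0 : V (fun _ : Fin n => (0 : C)) = 0 := hV0
  -- key comparison lemmas
  have key : ∀ (m k : ℕ), (m : ℝ) * Vx ≥ (k : ℝ) * Vy →
      (m : ℝ) * V Pxi ≥ (k : ℝ) * V Pyi := by
    intro m k h
    have hd := hdom (m • Pxi) (k • Pyi) ?_
    · rw [hsmul, hsmul] at hd; exact hd
    · intro j
      have h1 : (m • Pxi) j = m • (Pxi j) := rfl
      have h2 : (k • Pyi) j = k • (Pyi j) := rfl
      rw [h1, h2, hconst, hconst]
      by_cases hj : j = i
      · simp only [hPxi, hPyi, hj, if_pos rfl]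
        exact h
      · simp only [hPxi, hPyi, if_neg hj, hVc0, mul_zero, ge_iff_le, le_refl]
  have key2 : ∀ (m k : ℕ), (m : ℝ) * Vx ≤ (k : ℝ) * Vy →
      (m : ℝ) * V Pxi ≤ (k : ℝ) * V Pyi := by
    intro m k h
    have hd := hdom (k • Pyi) (m • Pxi) ?_
    · rw [hsmul, hsmul] at hd; exact hd
    · intro j
      have h1 : (m • Pxi) j = m • (Pxi j) := rfl
      have h2 : (k • Pyi) j = k • (Pyi j) := rfl
      rw [h1, h2, hconst, hconst]
      by_cases hj : j = i
      · simp only [hPxi, hPyi, hj, if_pos rfl]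
        exact h
      · simp only [hPxi, hPyi, if_neg hj, hVc0, mul_zero, ge_iff_le, le_refl]
  -- rational versions
  have keyQ : ∀ q : ℚ, 0 ≤ q → (q : ℝ) * Vx ≥ Vy → (q : ℝ) * V Pxi ≥ V Pyi := by
    intro q hq h
    have hden : (0 : ℝ) < (q.den : ℝ) := by positivity
    have hnum : (q.num.toNat : ℝ) = ((q.num : ℤ) : ℝ) := by
      have := Rat.num_nonneg.mpr hq
      exact_mod_cast Int.toNat_of_nonneg this
    have hqcast : (q : ℝ) = (q.num.toNat : ℝ) / (q.den : ℝ) := by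
      rw [hnum, Rat.cast_def]
    have h' : (q.num.toNat : ℝ) * Vx ≥ (q.den : ℝ) * Vy := by
      rw [hqcast] at h
      rw [ge_iff_le, ← sub_nonneg] at h ⊢
      have := mul_le_mul_of_nonneg_left h (le_of_lt hden)
      calc (0:ℝ) ≤ (q.den : ℝ) * (q.num.toNat / q.den * Vx - Vy) := by
              have : (0:ℝ) ≤ q.num.toNat / q.den * Vx - Vy := h
              positivity
        _ = (q.num.toNat : ℝ) * Vx - (q.den : ℝ) * Vy := by
              field_simp
    have hk := key q.num.toNat q.den h'
    rw [hqcast, ge_iff_le, ← sub_nonneg]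
    rw [ge_iff_le, ← sub_nonneg] at hk
    calc (0:ℝ) ≤ ((q.num.toNat : ℝ) * V Pxi - (q.den : ℝ) * V Pyi) / q.den := by
            positivity
      _ = (q.num.toNat : ℝ) / q.den * V Pxi - V Pyi := by field_simp
  have keyQ2 : ∀ q : ℚ, 0 ≤ q → (q : ℝ) * Vx ≤ Vy → (q : ℝ) * V Pxi ≤ V Pyi := by
    intro q hq h
    have hden : (0 : ℝ) < (q.den : ℝ) := by positivity
    have hnum : (q.num.toNat : ℝ) = ((q.num : ℤ) : ℝ) := by
      have := Rat.num_nonneg.mpr hq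
      exact_mod_cast Int.toNat_of_nonneg this
    have hqcast : (q : ℝ) = (q.num.toNat : ℝ) / (q.den : ℝ) := by
      rw [hnum, Rat.cast_def]
    have h' : (q.num.toNat : ℝ) * Vx ≤ (q.den : ℝ) * Vy := by
      rw [hqcast] at h
      rw [← sub_nonneg] at h ⊢
      calc (0:ℝ) ≤ (q.den : ℝ) * (Vy - q.num.toNat / q.den * Vx) := by positivity
        _ = (q.den : ℝ) * Vy - (q.num.toNat : ℝ) * Vx := by field_simp
    have hk := key2 q.num.toNat q.den h'
    rw [hqcast, ← sub_nonneg]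
    rw [← sub_nonneg] at hk
    calc (0:ℝ) ≤ ((q.den : ℝ) * V Pyi - (q.num.toNat : ℝ) * V Pxi) / q.den := by
            positivity
      _ = V Pyi - (q.num.toNat : ℝ) / q.den * V Pxi := by field_simp
  -- nonnegativity
  have hA0 : 0 ≤ V Pxi := by
    have := hdom Pxi 0 ?_
    · rw [hV0] at this; exact this
    · intro j
      have : (0 : Fin n → C) j = (0 : C) := rfl
      rw [this, hVc0]
      by_cases hj : j = i
      · simp only [hPxi, hj, if_pos rfl]; exact le_of_lt hx
      · simp only [hPxi, if_neg hj, hVc0, le_refl]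
  have hB0 : 0 ≤ V Pyi := by
    have := hdom Pyi 0 ?_
    · rw [hV0] at this; exact this
    · intro j
      have : (0 : Fin n → C) j = (0 : C) := rfl
      rw [this, hVc0]
      by_cases hj : j = i
      · simp only [hPyi, hj, if_pos rfl]; exact le_of_lt hy
      · simp only [hPyi, if_neg hj, hVc0, le_refl]
  set A := V Pxi
  set B := V Pyi
  set c : ℝ := Vy / Vx with hc
  have hcpos : 0 < c := by positivity
  have h1 : B ≤ c * A := by
    by_contra hcon
    push_neg at hcon
    rcases eq_or_lt_of_le hA0 with hAeq | hApos
    · -- A = 0 : pick m with m * Vx ≥ Vy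
      obtain ⟨m, hm⟩ := exists_nat_gt (Vy / Vx)
      have hm' : ((m : ℚ) : ℝ) * Vx ≥ Vy := by
        push_cast
        rw [ge_iff_le, ← div_le_iff₀ hx] at *
        exact le_of_lt hm
      have := keyQ m (by positivity) hm'
      rw [← hAeq] at this
      have hB : B ≤ 0 := by simpa using this
      nlinarith
    · have hclt : c < B / A := by
        rw [lt_div_iff₀ hApos]; linarith
      obtain ⟨q, hq1, hq2⟩ := exists_rat_btwn hclt
      have hq0 : (0:ℚ) ≤ q := by
        have : (0:ℝ) < q := lt_trans hcpos hq1
        exact_mod_cast le_of_lt this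
      have hqVx : (q : ℝ) * Vx ≥ Vy := by
        rw [hc] at hq1
        rw [ge_iff_le, ← div_le_iff₀ hx]
        exact le_of_lt hq1
      have := keyQ q hq0 hqVx
      rw [lt_div_iff₀ hApos] at hq2
      linarith
  have h2 : c * A ≤ B := by
    by_contra hcon
    push_neg at hcon
    rcases eq_or_lt_of_le hA0 with hAeq | hApos
    · rw [← hAeq, mul_zero] at hcon; linarith
    · have hclt : B / A < c := by
        rw [div_lt_iff₀ hApos]; linarith
      obtain ⟨q, hq1, hq2⟩ := exists_rat_btwn hclt
      have hq0 : (0:ℚ) ≤ q := by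
        have : (0:ℝ) ≤ B / A := by positivity
        have : (0:ℝ) < q := lt_of_le_of_lt this hq1
        exact_mod_cast le_of_lt this
      have hqVx : (q : ℝ) * Vx ≤ Vy := by
        rw [hc] at hq2
        rw [← le_div_iff₀ hx]
        exact le_of_lt hq2
      have := keyQ2 q hq0 hqVx
      rw [div_lt_iff₀ hApos] at hq1
      linarith
  have hBA : B = c * A := le_antisymm h1 h2
  show B / Vy = A / Vx
  rw [hBA, hc]
  field_simp
end

section
/- Let Pr be any function on events (subsets of finite measurement outcome sets) such that: (a) Pr(C) > Pr(C') iff weight(C) > weight(C') and Pr(C) = Pr(C') iff weight(C) = weight(C'); (b) Pr is additive on disjoint events of a single measurement; (c) Pr of the full outcome set of any measurement is 1; and suppose for every rational w ∈ [0,1] and every N there exist measurements with N equally-weighted outcomes and events of any rational weight. Then Pr(C) = weight(C) for every event C with rational weight. -/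
theorem stmt_13
    (Pr : ∀ n : ℕ, (Fin n → ℝ) → Finset (Fin n) → ℝ)
    (ha : ∀ (n : ℕ) (w : Fin n → ℝ) (C : Finset (Fin n))
        (n' : ℕ) (w' : Fin n' → ℝ) (C' : Finset (Fin n')),
      ((∀ i, 0 < w i) ∧ ∑ i, w i = 1) → ((∀ i, 0 < w' i) ∧ ∑ i, w' i = 1) →
      ((Pr n w C > Pr n' w' C' ↔ ∑ i ∈ C, w i > ∑ i ∈ C', w' i) ∧
       (Pr n w C = Pr n' w' C' ↔ ∑ i ∈ C, w i = ∑ i ∈ C', w' i)))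
    (hb : ∀ (n : ℕ) (w : Fin n → ℝ) (C D : Finset (Fin n)),
      ((∀ i, 0 < w i) ∧ ∑ i, w i = 1) → Disjoint C D →
      Pr n w (C ∪ D) = Pr n w C + Pr n w D)
    (hc : ∀ (n : ℕ) (w : Fin n → ℝ),
      ((∀ i, 0 < w i) ∧ ∑ i, w i = 1) → Pr n w Finset.univ = 1)
    (n : ℕ) (w : Fin n → ℝ) (hw : (∀ i, 0 < w i) ∧ ∑ i, w i = 1)
    (C : Finset (Fin n)) (q : ℚ) (hq : ∑ i ∈ C, w i = (q : ℝ)) :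
    Pr n w C = ∑ i ∈ C, w i := by
  -- bounds on q
  have hq0 : (0:ℝ) ≤ (q:ℝ) := by
    rw [← hq]; exact Finset.sum_nonneg fun i _ => (hw.1 i).le
  have hq1 : (q:ℝ) ≤ 1 := by
    rw [← hq, ← hw.2]
    exact Finset.sum_le_sum_of_subset_of_nonneg (Finset.subset_univ C)
      (fun i _ _ => (hw.1 i).le)
  set N := q.den with hN
  have hNpos : 0 < N := q.pos
  set K := q.num.toNat with hKdef
  have hnum_nonneg : 0 ≤ q.num := Rat.num_nonneg.mpr (by exact_mod_cast hq0)
  have hqnum : (q.num : ℚ) = (K : ℚ) := by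
    exact_mod_cast (Int.toNat_of_nonneg hnum_nonneg).symm
  have hq_eq : (q:ℚ) = (K:ℚ) / (N:ℚ) := by
    rw [← hqnum, hN]; exact (Rat.num_div_den q).symm
  have hKN : K ≤ N := by
    have hle : (q:ℚ) ≤ 1 := by exact_mod_cast hq1
    rw [hq_eq, div_le_one (by exact_mod_cast hNpos)] at hle
    exact_mod_cast hle
  -- uniform measurement
  set u : Fin N → ℝ := fun _ => (N:ℝ)⁻¹ with hu_def
  have hNne : (N:ℝ) ≠ 0 := by positivity
  have hu : (∀ i, 0 < u i) ∧ ∑ i, u i = 1 := by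
    constructor
    · intro i; positivity
    · simp [hu_def, Finset.sum_const, Finset.card_univ, mul_inv_cancel₀ hNne]
  -- Pr of empty set is 0
  have hempty : Pr N u ∅ = 0 := by
    have := hb N u ∅ ∅ hu (Finset.disjoint_empty_left ∅)
    simp at this
    linarith
  set i0 : Fin N := ⟨0, hNpos⟩ with hi0
  set p : ℝ := Pr N u {i0} with hp
  -- every subset has Pr = card * p
  have hcard : ∀ S : Finset (Fin N), Pr N u S = S.card * p := by
    intro S
    induction S using Finset.induction_on with
    | empty => simp [hempty]
    | @insert a S hx ih =>
      have hdisj : Disjoint {a} S := Finset.disjoint_singleton_left.mpr hx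
      have h1 : Pr N u ({a} ∪ S) = Pr N u {a} + Pr N u S := hb N u {a} S hu hdisj
      have h2 : Pr N u {a} = p := by
        rw [hp]
        exact (ha N u {a} N u {i0} hu hu).2.mpr (by simp [hu_def])
      rw [Finset.insert_eq, h1, h2, ih, ← Finset.insert_eq,
        Finset.card_insert_of_notMem hx]
      push_cast; ring
  -- p = 1/N
  have huniv : (Finset.univ : Finset (Fin N)).card = N := by simp
  have hp_val : p = (N:ℝ)⁻¹ := by
    have h1 : Pr N u Finset.univ = 1 := hc N u hu
    rw [hcard Finset.univ, huniv] at h1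
    field_simp at h1 ⊢
    linarith
  -- the event of weight q
  set C' : Finset (Fin N) :=
    Finset.attachFin (Finset.range K)
      (fun m hm => lt_of_lt_of_le (Finset.mem_range.mp hm) hKN) with hC'
  have hC'card : C'.card = K := by
    rw [hC', Finset.card_attachFin, Finset.card_range]
  have hqR : (q:ℝ) = (K:ℝ) / (N:ℝ) := by rw [hq_eq]; push_cast; ring
  have hweight : ∑ i ∈ C', u i = (q:ℝ) := by
    rw [hqR, Finset.sum_const, hC'card]
    simp [nsmul_eq_mul, div_eq_mul_inv]
  have hPrC' : Pr N u C' = (q:ℝ) := by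
    rw [hcard C', hC'card, hp_val, hqR, div_eq_mul_inv]
  have hmain : Pr n w C = Pr N u C' :=
    (ha n w C N u C' hw hu).2.mpr (by rw [hq, hweight])
  rw [hmain, hPrC', hq]
end

section
/- With the hypotheses of the previous statement strengthened by monotone approximation — if weight(C) ≥ weight(Cₙ) then Pr(C) ≥ Pr(Cₙ) — and the existence, for each real w ∈ [0,1], of events of every rational weight, Pr(C) = weight(C) for all events C, including those of irrational weight. Hence the weight function is the unique probability function compatible with the qualitative probability ordering. -/
theorem stmt_14
    (Pr : ∀ n : ℕ, (Fin n → ℝ) → Finset (Fin n) → ℝ)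
    (ha : ∀ (n : ℕ) (w : Fin n → ℝ) (C : Finset (Fin n))
        (n' : ℕ) (w' : Fin n' → ℝ) (C' : Finset (Fin n')),
      ((∀ i, 0 < w i) ∧ ∑ i, w i = 1) → ((∀ i, 0 < w' i) ∧ ∑ i, w' i = 1) →
      ((Pr n w C > Pr n' w' C' ↔ ∑ i ∈ C, w i > ∑ i ∈ C', w' i) ∧
       (Pr n w C = Pr n' w' C' ↔ ∑ i ∈ C, w i = ∑ i ∈ C', w' i)))
    (hb : ∀ (n : ℕ) (w : Fin n → ℝ) (C D : Finset (Fin n)),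
      ((∀ i, 0 < w i) ∧ ∑ i, w i = 1) → Disjoint C D →
      Pr n w (C ∪ D) = Pr n w C + Pr n w D)
    (hc : ∀ (n : ℕ) (w : Fin n → ℝ),
      ((∀ i, 0 < w i) ∧ ∑ i, w i = 1) → Pr n w Finset.univ = 1)
    (hmono : ∀ (n : ℕ) (w : Fin n → ℝ) (C : Finset (Fin n))
        (n' : ℕ) (w' : Fin n' → ℝ) (C' : Finset (Fin n')),
      ((∀ i, 0 < w i) ∧ ∑ i, w i = 1) → ((∀ i, 0 < w' i) ∧ ∑ i, w' i = 1) →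
      (∑ i ∈ C, w i ≥ ∑ i ∈ C', w' i) → Pr n w C ≥ Pr n' w' C')
    (n : ℕ) (w : Fin n → ℝ) (hw : (∀ i, 0 < w i) ∧ ∑ i, w i = 1)
    (C : Finset (Fin n)) :
    Pr n w C = ∑ i ∈ C, w i := by
  classical
  -- empty event has Pr 0
  have hempty : ∀ (m : ℕ) (v : Fin m → ℝ), ((∀ i, 0 < v i) ∧ ∑ i, v i = 1) →
      Pr m v (∅ : Finset (Fin m)) = 0 := by
    intro m v hv
    have := hb m v ∅ ∅ hv (by simp)
    simp at this
    linarith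
  -- uniform weights are valid
  have huni : ∀ q : ℕ, 0 < q →
      ((∀ i : Fin q, 0 < ((q : ℝ)⁻¹)) ∧ ∑ _i : Fin q, ((q : ℝ)⁻¹) = 1) := by
    intro q hq
    have hq' : (0:ℝ) < q := by exact_mod_cast hq
    constructor
    · intro _; exact inv_pos.mpr hq'
    · rw [Finset.sum_const, Finset.card_univ, Fintype.card_fin, nsmul_eq_mul]
      field_simp
  -- Pr of A under uniform weight on q points equals A.card / q
  have hcard : ∀ q : ℕ, ∀ hq : 0 < q, ∀ A : Finset (Fin q),
      Pr q (fun _ => (q : ℝ)⁻¹) A = (A.card : ℝ) / q := by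
    intro q hq
    have hq' : (0:ℝ) < q := by exact_mod_cast hq
    set c := Pr q (fun _ => (q : ℝ)⁻¹) {⟨0, hq⟩} with hcdef
    have key : ∀ A : Finset (Fin q), Pr q (fun _ => (q : ℝ)⁻¹) A = (A.card : ℝ) * c := by
      intro A
      induction A using Finset.induction_on with
      | empty => simp [hempty q _ (huni q hq)]
      | insert a S hnot ih =>
        have hins : insert a S = {a} ∪ S := by rw [Finset.insert_eq]
        have hsing : Pr q (fun _ => (q : ℝ)⁻¹) {a} = c := by
          exact (ha q _ {a} q _ {⟨0, hq⟩} (huni q hq) (huni q hq)).2.mpr (by simp)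
        rw [hins, hb q _ {a} S (huni q hq) (by simpa using hnot), hsing, ih,
          ← Finset.insert_eq, Finset.card_insert_of_notMem hnot]
        push_cast
        ring
    have hu : Pr q (fun _ => (q : ℝ)⁻¹) Finset.univ = (q : ℝ) * c := by
      rw [key Finset.univ, Finset.card_univ, Fintype.card_fin]
    have h1 : (q : ℝ) * c = 1 := by rw [← hu, hc q _ (huni q hq)]
    have hcval : c = 1 / q := by field_simp at h1 ⊢; linarith
    intro A
    rw [key A, hcval]
    ring
  -- for each rational 0 ≤ r ≤ 1 there is an event of weight r with Pr = r
  have hrat : ∀ r : ℚ, 0 ≤ r → (r : ℝ) ≤ 1 →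
      ∃ (q : ℕ) (hq : 0 < q) (A : Finset (Fin q)),
        (∑ i ∈ A, (q : ℝ)⁻¹) = (r : ℝ) ∧ Pr q (fun _ => (q : ℝ)⁻¹) A = (r : ℝ) := by
    intro r hr0 hr1
    set q := r.den with hqdef
    set k := r.num.toNat with hkdef
    have hq : 0 < q := r.pos
    have hq' : (0:ℝ) < q := by exact_mod_cast hq
    have hknum : (k : ℤ) = r.num := Int.toNat_of_nonneg (Rat.num_nonneg.mpr hr0)
    have hrval : (r : ℝ) = (k : ℝ) / q := by
      rw [Rat.cast_def]
      congr 1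
      exact_mod_cast hknum.symm
    have hkq : k ≤ q := by
      by_contra hcon
      push_neg at hcon
      have : (1:ℝ) < (k:ℝ)/q := by
        rw [lt_div_iff₀ hq', one_mul]
        exact_mod_cast hcon
      rw [← hrval] at this
      linarith
    refine ⟨q, hq, Finset.image (Fin.castLE hkq) Finset.univ, ?_, ?_⟩
    · rw [Finset.sum_const, nsmul_eq_mul,
        Finset.card_image_of_injective _ (Fin.castLE_injective hkq),
        Finset.card_univ, Fintype.card_fin, hrval]
      field_simp
    · rw [hcard q hq, Finset.card_image_of_injective _ (Fin.castLE_injective hkq),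
        Finset.card_univ, Fintype.card_fin, hrval]
  -- basic bounds on the weight of C
  set s := ∑ i ∈ C, w i with hsdef
  have hs0 : 0 ≤ s := Finset.sum_nonneg fun i _ => (hw.1 i).le
  have hs1 : s ≤ 1 := by
    rw [← hw.2]
    exact Finset.sum_le_sum_of_subset_of_nonneg (Finset.subset_univ C)
      (fun i _ _ => (hw.1 i).le)
  -- lower bound: Pr C ≥ r for all rationals r ≤ s
  have hlow : ∀ r : ℚ, 0 ≤ r → (r : ℝ) ≤ s → (r : ℝ) ≤ Pr n w C := by
    intro r hr0 hrs
    obtain ⟨q, hq, A, hwt, hpr⟩ := hrat r hr0 (le_trans hrs hs1)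
    have := hmono n w C q _ A hw (huni q hq) (by rw [hwt]; exact hrs)
    linarith
  -- upper bound
  have hhigh : ∀ r : ℚ, (r : ℝ) ≤ 1 → s ≤ (r : ℝ) → Pr n w C ≤ (r : ℝ) := by
    intro r hr1 hrs
    have hr0 : 0 ≤ r := by
      have : (0:ℝ) ≤ (r:ℝ) := le_trans hs0 hrs
      exact_mod_cast this
    obtain ⟨q, hq, A, hwt, hpr⟩ := hrat r hr0 hr1
    have := hmono q _ A n w C (huni q hq) hw (by rw [hwt]; exact hrs)
    linarith
  -- Pr C is between 0 and 1
  have hPr0 : 0 ≤ Pr n w C := by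
    have := hmono n w C n w ∅ hw hw (by simpa using hs0)
    have he := hempty n w hw
    linarith
  have hPr1 : Pr n w C ≤ 1 := by
    have := hmono n w Finset.univ n w C hw hw (by rw [hw.2]; exact hs1)
    have hu := hc n w hw
    linarith
  by_contra hne
  rcases lt_or_gt_of_ne hne with hlt | hgt
  · obtain ⟨r, hr1, hr2⟩ := exists_rat_btwn hlt
    have hr0 : (0:ℚ) ≤ r := by
      have : (0:ℝ) ≤ (r:ℝ) := le_trans hPr0 hr1.le
      exact_mod_cast this
    have := hlow r hr0 hr2.le
    linarith
  · obtain ⟨r, hr1, hr2⟩ := exists_rat_btwn hgt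
    have hr1' : (r:ℝ) ≤ 1 := le_trans hr2.le hPr1
    have := hhigh r hr1' hr1.le
    linarith
end

section
/- Boundedness of value from stability: suppose V : C → ℝ represents preferences over consequences, and for each pair c' ≻ c there is ε > 0 such that for every consequence d, the mixture assigning weight 1−ε to c and ε to d has expected utility (1−ε)V(c) + εV(d) < V(c'). Then V is bounded above: there is no sequence cᵢ with V(cᵢ) → +∞. -/
/-! Stability applied to one strict preference `c₀ ≺ c₁` caps every utility: from
`(1 - ε) V(c₀) + ε V(d) < V(c₁)` for all `d` we get `V(d) < (V(c₁) - (1 - ε) V(c₀)) / ε`.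
An unbounded sequence of utilities supplies such a pair and then exceeds the cap. -/

theorem bddAbove_range_of_forall_mixture_lt {C : Type*} (V : C → ℝ) {c₀ c₁ : C} {ε : ℝ}
    (hε : 0 < ε) (hmix : ∀ d, (1 - ε) * V c₀ + ε * V d < V c₁) :
    BddAbove (Set.range V) := by
  refine ⟨(V c₁ - (1 - ε) * V c₀) / ε, ?_⟩
  rintro _ ⟨d, rfl⟩
  rw [le_div_iff₀ hε]
  linarith [hmix d]

theorem stmt_19 {C : Type*} (V : C → ℝ) (succ : C → C → Prop)
    (hrep : ∀ c c' : C, V c > V c' ↔ succ c c')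
    (hstab : ∀ c c' : C, succ c' c → ∃ ε : ℝ, 0 < ε ∧
      ∀ d : C, (1 - ε) * V c + ε * V d < V c') :
    ¬ ∃ c : ℕ → C, Filter.Tendsto (fun i => V (c i)) Filter.atTop Filter.atTop := by
  rintro ⟨c, hc⟩
  obtain ⟨n, hn⟩ := (hc.eventually_gt_atTop (V (c 0))).exists
  obtain ⟨ε, hε, hmix⟩ := hstab (c 0) (c n) ((hrep _ _).mp hn)
  have hV : BddAbove (Set.range V) := bddAbove_range_of_forall_mixture_lt V hε hmix
  exact Filter.not_bddAbove_of_tendsto_atTop hc (hV.mono (Set.range_comp_subset_range c V))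
end
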